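/- Let ε ≥ 0 and let (β_τ)_{τ∈[0,ε]} be a family of admissible and tame functions ℝⁿ×ℝⁿ → ℕ such that β_τ and β_{τ'} are |τ−τ'|-interleaved for all τ, τ' ∈ [0,ε]. Then for every proper cornerpoint (u,v) of β_0 (i.e. μ_{β_0}(u,v) > 0), either min_{i} (v i − u i) ≤ 2ε, or there exists a proper cornerpoint (u',v') of β_ε with max(‖u−u'‖∞, ‖v−v'‖∞) ≤ ε. -/
import Mathlib


namespace PersistSpace

variable {n : ℕ}

/-- `u ≼ v` : componentwise ≤ -/
def vle (u v : Fin n → ℝ) : Prop := ∀ i, u i ≤ v i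

/-- `u ≺ v` : componentwise < -/
def vlt (u v : Fin n → ℝ) : Prop := ∀ i, u i < v i

/-- `D_n⁺ = {(u,v) : u ≺ v}` -/
def Dplus (n : ℕ) : Set ((Fin n → ℝ) × (Fin n → ℝ)) := {p | vlt p.1 p.2}

/-- Monotonicity: non-decreasing in `u`, non-increasing in `v`. -/
def Monot (β : (Fin n → ℝ) × (Fin n → ℝ) → ℕ) : Prop :=
  (∀ u u' v : Fin n → ℝ, vle u u' → vlt u' v → β (u, v) ≤ β (u', v)) ∧
  (∀ u v v' : Fin n → ℝ, vlt u v → vle v v' → β (u, v') ≤ β (u, v))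

/-- Jump Monotonicity. -/
def JumpMonot (β : (Fin n → ℝ) × (Fin n → ℝ) → ℕ) : Prop :=
  ∀ u1 u2 v1 v2 : Fin n → ℝ, vle u1 u2 → vlt u2 v1 → vle v1 v2 →
    (β (u2, v2) : ℤ) - β (u1, v2) ≤ (β (u2, v1) : ℤ) - β (u1, v1)

/-- Right-continuity in each variable separately. -/
def RightCont (β : (Fin n → ℝ) × (Fin n → ℝ) → ℕ) : Prop :=
  ∀ u v : Fin n → ℝ, vlt u v → ∃ δ > (0:ℝ),
    (∀ u' : Fin n → ℝ, vle u u' → ‖u' - u‖ < δ → β (u', v) = β (u, v)) ∧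
    (∀ v' : Fin n → ℝ, vle v v' → ‖v' - v‖ < δ → β (u, v') = β (u, v))

def Admissible (β : (Fin n → ℝ) × (Fin n → ℝ) → ℕ) : Prop :=
  Monot β ∧ JumpMonot β ∧ RightCont β

/-- Tameness: boundedness at infinity and vanishing below. -/
def Tame (β : (Fin n → ℝ) × (Fin n → ℝ) → ℕ) : Prop :=
  ∃ C > (0:ℝ),
    (∀ u v v' : Fin n → ℝ, vlt u v → vlt u v' → (∀ i, C ≤ v i) → (∀ i, C ≤ v' i) →
      β (u, v) = β (u, v')) ∧
    (∀ u v : Fin n → ℝ, vlt u v → (∀ i, u i ≤ -C) → β (u, v) = 0)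

/-- `μ_e(u,v)` -/
def muE (β : (Fin n → ℝ) × (Fin n → ℝ) → ℕ) (e u v : Fin n → ℝ) : ℤ :=
  (β (u + e, v - e) : ℤ) - β (u - e, v - e) - β (u + e, v + e) + β (u - e, v + e)

/-- Multiplicity `μ(u,v)`: infimum of `μ_e(u,v)` over admissible `e`. -/
noncomputable def mult (β : (Fin n → ℝ) × (Fin n → ℝ) → ℕ) (u v : Fin n → ℝ) : ℤ :=
  sInf {m : ℤ | ∃ e : Fin n → ℝ, vlt 0 e ∧ vlt (u + e) (v - e) ∧ m = muE β e u v}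

/-- `μ∞_{e,v}(u)` -/
def muInfE (β : (Fin n → ℝ) × (Fin n → ℝ) → ℕ) (e v u : Fin n → ℝ) : ℤ :=
  (β (u + e, v) : ℤ) - β (u - e, v)

/-- Multiplicity at infinity `μ∞(u)`. -/
noncomputable def multInf (β : (Fin n → ℝ) × (Fin n → ℝ) → ℕ) (u : Fin n → ℝ) : ℤ :=
  sInf {m : ℤ | ∃ e v : Fin n → ℝ, vlt 0 e ∧ vlt (u + e) v ∧ m = muInfE β e v u}

/-- `u` is a discontinuity point of `β(·,v)` (ℕ discrete). -/
def DiscontAt1 (β : (Fin n → ℝ) × (Fin n → ℝ) → ℕ) (v u : Fin n → ℝ) : Prop :=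
  ¬ ContinuousWithinAt (fun u' => β (u', v)) {u' | vlt u' v} u

/-- `v` is a discontinuity point of `β(u,·)` (ℕ discrete). -/
def DiscontAt2 (β : (Fin n → ℝ) × (Fin n → ℝ) → ℕ) (u v : Fin n → ℝ) : Prop :=
  ¬ ContinuousWithinAt (fun v' => β (u, v')) {v' | vlt u v'} v

/-- `p` is a discontinuity point of `β` restricted to `D_n⁺`. -/
def DiscontPt (β : (Fin n → ℝ) × (Fin n → ℝ) → ℕ) (p : (Fin n → ℝ) × (Fin n → ℝ)) : Prop :=
  ¬ ContinuousWithinAt β (Dplus n) p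

/-- `β` and `γ` are `η`-interleaved. -/
def Interleaved (β γ : (Fin n → ℝ) × (Fin n → ℝ) → ℕ) (η : ℝ) : Prop :=
  ∀ u v : Fin n → ℝ, vlt u v →
    β (u - (fun _ => η), v + (fun _ => η)) ≤ γ (u, v) ∧
    γ (u - (fun _ => η), v + (fun _ => η)) ≤ β (u, v)

section Aux

variable {n : ℕ}

/-- constant vector -/
def cv {n : ℕ} (c : ℝ) : Fin n → ℝ := fun _ => c

@[simp] lemma cv_apply (c : ℝ) (i : Fin n) : cv c i = c := rfl

lemma vle_refl (x : Fin n → ℝ) : vle x x := fun _ => le_rfl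
lemma vle_trans {x y z : Fin n → ℝ} (h1 : vle x y) (h2 : vle y z) : vle x z :=
  fun i => (h1 i).trans (h2 i)
lemma vlt_of_vle_vlt {x y z : Fin n → ℝ} (h1 : vle x y) (h2 : vlt y z) : vlt x z :=
  fun i => lt_of_le_of_lt (h1 i) (h2 i)
lemma vlt_of_vlt_vle {x y z : Fin n → ℝ} (h1 : vlt x y) (h2 : vle y z) : vlt x z :=
  fun i => lt_of_lt_of_le (h1 i) (h2 i)
lemma vle_of_vlt {x y : Fin n → ℝ} (h : vlt x y) : vle x y := fun i => (h i).le

/-- shift algebra -/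
lemma shift_shift (x : Fin n → ℝ) (a b : ℝ) : (x + cv a) + cv b = x + cv (a + b) := by
  funext i; simp [cv]; ring

lemma shift_sub (x : Fin n → ℝ) (a b : ℝ) :
    (x + cv a) - (fun _ : Fin n => b) = x + cv (a - b) := by
  funext i; simp [cv]; ring

lemma shift_add (x : Fin n → ℝ) (a b : ℝ) :
    (x + cv a) + (fun _ : Fin n => b) = x + cv (a + b) := by
  funext i; simp [cv]; ring

lemma shift_zero (x : Fin n → ℝ) : x + cv 0 = x := by funext i; simp [cv]

lemma vle_shift {x : Fin n → ℝ} {a b : ℝ} (h : a ≤ b) : vle (x + cv a) (x + cv b) := by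
  intro i; simp [cv]; linarith

/-- the rectangle (inclusion-exclusion) quantity -/
def Rf {n : ℕ} (f : (Fin n → ℝ) × (Fin n → ℝ) → ℕ) (a1 a2 b1 b2 : Fin n → ℝ) : ℤ :=
  (f (a2, b1) : ℤ) - f (a1, b1) - f (a2, b2) + f (a1, b2)

lemma muE_eq_Rf (f : (Fin n → ℝ) × (Fin n → ℝ) → ℕ) (e x y : Fin n → ℝ) :
    muE f e x y = Rf f (x - e) (x + e) (y - e) (y + e) := rfl

lemma Rf_nonneg {f : (Fin n → ℝ) × (Fin n → ℝ) → ℕ} (hJ : JumpMonot f)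
    {a1 a2 b1 b2 : Fin n → ℝ} (h1 : vle a1 a2) (h2 : vlt a2 b1) (h3 : vle b1 b2) :
    0 ≤ Rf f a1 a2 b1 b2 := by
  have := hJ a1 a2 b1 b2 h1 h2 h3
  unfold Rf; linarith

/-- box monotonicity -/
lemma Rf_mono {f : (Fin n → ℝ) × (Fin n → ℝ) → ℕ} (hJ : JumpMonot f)
    {a1 a1' a2' a2 b1 b1' b2' b2 : Fin n → ℝ}
    (h1 : vle a1 a1') (h2 : vle a1' a2') (h3 : vle a2' a2)
    (hm : vlt a2 b1)
    (h4 : vle b1 b1') (h5 : vle b1' b2') (h6 : vle b2' b2) :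
    Rf f a1' a2' b1' b2' ≤ Rf f a1 a2 b1 b2 := by
  have hb1' : vlt a2 b1' := vlt_of_vlt_vle hm h4
  have hb2' : vlt a2 b2' := vlt_of_vlt_vle hb1' h5
  have hS1 : 0 ≤ Rf f a1 a1' b1' b2' :=
    Rf_nonneg hJ h1 (vlt_of_vle_vlt (vle_trans h2 h3) hb1') h5
  have hS2 : 0 ≤ Rf f a2' a2 b1' b2' :=
    Rf_nonneg hJ h3 hb1' h5
  have hS3 : 0 ≤ Rf f a1 a2 b1 b1' :=
    Rf_nonneg hJ (vle_trans h1 (vle_trans h2 h3)) hm h4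
  have hS4 : 0 ≤ Rf f a1 a2 b2' b2 :=
    Rf_nonneg hJ (vle_trans h1 (vle_trans h2 h3)) hb2' h6
  unfold Rf at *; linarith

/-- the set appearing in `mult` -/
lemma mult_le_muE {f : (Fin n → ℝ) × (Fin n → ℝ) → ℕ} (hJ : JumpMonot f)
    {x y e : Fin n → ℝ} (he : vlt 0 e) (hee : vlt (x + e) (y - e)) :
    mult f x y ≤ muE f e x y := by
  apply csInf_le
  · refine ⟨0, ?_⟩
    rintro m ⟨e', he', hee', rfl⟩
    rw [muE_eq_Rf]
    refine Rf_nonneg hJ ?_ hee' ?_ <;> intro i <;>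
      simp only [Pi.sub_apply, Pi.add_apply] <;> have := he' i <;>
      simp only [Pi.zero_apply] at this <;> linarith
  · exact ⟨e, he, hee, rfl⟩

lemma one_le_muE_of_mult_pos {f : (Fin n → ℝ) × (Fin n → ℝ) → ℕ} (hJ : JumpMonot f)
    {x y e : Fin n → ℝ} (hpos : 0 < mult f x y) (he : vlt 0 e)
    (hee : vlt (x + e) (y - e)) : 1 ≤ muE f e x y := by
  have := mult_le_muE hJ he hee
  omega

lemma mult_pos_of {f : (Fin n → ℝ) × (Fin n → ℝ) → ℕ}
    {x y : Fin n → ℝ} (hxy : vlt x y)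
    (h : ∀ e : Fin n → ℝ, vlt 0 e → vlt (x + e) (y - e) → 1 ≤ muE f e x y) :
    0 < mult f x y := by
  have hne : ∃ m : ℤ, m ∈ {m : ℤ | ∃ e : Fin n → ℝ,
      vlt 0 e ∧ vlt (x + e) (y - e) ∧ m = muE f e x y} := by
    set e0 : Fin n → ℝ := fun i => (y i - x i)/4 with he0
    refine ⟨muE f e0 x y, e0, fun i => ?_, fun i => ?_, rfl⟩
    · have := hxy i; simp only [Pi.zero_apply, he0]; linarith
    · have := hxy i; simp only [Pi.add_apply, Pi.sub_apply, he0]; linarith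
  have h1 : (1:ℤ) ≤ mult f x y := by
    apply le_csInf ⟨_, hne.choose_spec⟩
    rintro m ⟨e, he, hee, rfl⟩
    exact h e he hee
  omega

end Aux

section Aux1b
variable {n : ℕ}
lemma neg_shift (x : Fin n → ℝ) (p : ℝ) : -((-x) + cv p) = x + cv (-p) := by
  funext i; simp [cv]; ring
end Aux1b
section Aux2

variable {n : ℕ}

/-- a monotone `ℤ`-valued function bounded below is eventually constant near the left
endpoint -/
lemma int_loc_const (φ : ℝ → ℤ) (W : ℝ) (hW : 0 < W)
    (hmono : ∀ s t : ℝ, 0 < s → s ≤ t → t ≤ W → φ s ≤ φ t)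
    (B : ℤ) (hB : ∀ s : ℝ, 0 < s → s ≤ W → B ≤ φ s) :
    ∃ δ : ℝ, 0 < δ ∧ δ ≤ W ∧ ∀ s : ℝ, 0 < s → s ≤ δ → φ s = φ δ := by
  have hbdd : ∃ b : ℤ, ∀ z : ℤ, (∃ s : ℝ, 0 < s ∧ s ≤ W ∧ φ s = z) → b ≤ z := by
    exact ⟨B, by rintro z ⟨s, hs1, hs2, rfl⟩; exact hB s hs1 hs2⟩
  have hinh : ∃ z : ℤ, ∃ s : ℝ, 0 < s ∧ s ≤ W ∧ φ s = z := ⟨φ W, W, hW, le_rfl, rfl⟩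
  obtain ⟨lb, ⟨s0, hs01, hs02, hval⟩, hlb⟩ := Int.exists_least_of_bdd hbdd hinh
  refine ⟨s0, hs01, hs02, fun s hs1 hs2 => ?_⟩
  have h1 : φ s ≤ φ s0 := hmono s s0 hs1 hs2 hs02
  have h2 : lb ≤ φ s := hlb _ ⟨s, hs1, le_trans hs2 hs02, rfl⟩
  omega

/-- Mixed-corner constancy: for `F` monotone with jump-monotonicity, the function
`(s,t) ↦ F (X - s·𝟙, Y - t·𝟙)` is constant on a punctured corner box `(0,δ]²`. -/
lemma mixed_const {F : (Fin n → ℝ) × (Fin n → ℝ) → ℕ} (hM : Monot F) (hJ : JumpMonot F)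
    (X Y : Fin n → ℝ) (W : ℝ) (hW : 0 < W) (hsep : ∀ i, X i + W < Y i) :
    ∃ δ : ℝ, 0 < δ ∧ δ ≤ W ∧ ∀ s t s' t' : ℝ,
      0 < s → s ≤ δ → 0 < t → t ≤ δ → 0 < s' → s' ≤ δ → 0 < t' → t' ≤ δ →
      F (X + cv (-s), Y + cv (-t)) = F (X + cv (-s'), Y + cv (-t')) := by
  set φ : ℝ → ℝ → ℤ := fun t s => (F (X + cv (-s), Y + cv (-t)) : ℤ) with hφ
  have hord : ∀ s t : ℝ, 0 ≤ s → t ≤ W → vlt (X + cv (-s)) (Y + cv (-t)) := by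
    intro s t hs ht i
    have := hsep i
    simp only [Pi.add_apply, cv_apply]
    linarith
  -- anti-monotone in s
  have hanti : ∀ t s s' : ℝ, t ≤ W → 0 < s → s ≤ s' → φ t s' ≤ φ t s := by
    intro t s s' ht hs hss
    have := hM.1 (X + cv (-s')) (X + cv (-s)) (Y + cv (-t))
      (vle_shift (by linarith)) (hord s t hs.le ht)
    simp only [hφ]; exact_mod_cast this
  have hub : ∀ t s : ℝ, t ≤ W → 0 < s → φ t s ≤ (F (X, Y + cv (-t)) : ℤ) := by
    intro t s ht hs
    have hX : X + cv (-(0:ℝ)) = X := by rw [neg_zero]; exact shift_zero X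
    have := hM.1 (X + cv (-s)) (X + cv (-(0:ℝ))) (Y + cv (-t))
      (vle_shift (by linarith)) (hX ▸ hord 0 t le_rfl ht)
    rw [hX] at this
    simp only [hφ]; exact_mod_cast this
  -- for each t, a constancy interval in s
  have H : ∀ t : ℝ, 0 < t → t ≤ W →
      ∃ d : ℝ, 0 < d ∧ d ≤ W ∧ ∀ s : ℝ, 0 < s → s ≤ d → φ t s = φ t d := by
    intro t ht1 ht2
    obtain ⟨d, hd1, hd2, hd3⟩ := int_loc_const (fun s => - φ t s) W hW
      (fun s s' hs hss hs' => neg_le_neg (hanti t s s' ht2 hs hss))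
      (-(F (X, Y + cv (-t)) : ℤ)) (fun s hs1 hs2 => neg_le_neg (hub t s ht2 hs1))
    exact ⟨d, hd1, hd2, fun s hs1 hs2 => by have := hd3 s hs1 hs2; omega⟩
  choose! st hst1 hst2 hstv using H
  set ψ : ℝ → ℤ := fun t => φ t (st t) with hψ
  -- ψ monotone in t
  have hψmono : ∀ t t' : ℝ, 0 < t → t ≤ t' → t' ≤ W → ψ t ≤ ψ t' := by
    intro t t' ht htt ht'
    have ht'0 : 0 < t' := lt_of_lt_of_le ht htt
    have htW : t ≤ W := le_trans htt ht'
    set m := min (st t) (st t') with hm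
    have hm0 : 0 < m := lt_min (hst1 t ht htW) (hst1 t' ht'0 ht')
    have e1 : ψ t = φ t m := (hstv t ht htW m hm0 (min_le_left _ _)).symm
    have e2 : ψ t' = φ t' m := (hstv t' ht'0 ht' m hm0 (min_le_right _ _)).symm
    rw [e1, e2]
    have := hM.2 (X + cv (-m)) (Y + cv (-t')) (Y + cv (-t))
      (hord m t' hm0.le ht') (vle_shift (by linarith))
    simp only [hφ]; exact_mod_cast this
  obtain ⟨t1, ht11, ht12, ht13⟩ := int_loc_const ψ W hW
    (fun t t' ht htt ht' => hψmono t t' ht htt ht') 0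
    (fun t ht1 ht2 => by
      have : (0:ℤ) ≤ φ t (st t) := by positivity
      exact this)
  set sstar := st t1 with hsstar
  have hs1 : 0 < sstar := hst1 t1 ht11 ht12
  have hs2 : sstar ≤ W := hst2 t1 ht11 ht12
  set L : ℤ := ψ t1 with hL
  -- main claim
  have key : ∀ s t : ℝ, 0 < s → s ≤ min sstar t1 → 0 < t → t ≤ min sstar t1 →
      φ t s = L := by
    intro s t hs hsle ht htle
    have hss : s ≤ sstar := le_trans hsle (min_le_left _ _)
    have htt : t ≤ t1 := le_trans htle (min_le_right _ _)
    have htW : t ≤ W := le_trans htt ht12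
    set s2 := min s (st t) with hs2def
    have hs20 : 0 < s2 := lt_min hs (hst1 t ht htW)
    -- upper bound : φ t s ≤ L
    have hupper : φ t s ≤ L := by
      have e1 : φ t s2 = ψ t := hstv t ht htW s2 hs20 (min_le_right _ _)
      have e2 : ψ t = L := by rw [hL]; exact ht13 t ht htt
      have := hanti t s2 s htW hs20 (min_le_left _ _)
      omega
    -- lower bound via jump monotonicity
    have hlower : L ≤ φ t s := by
      have hR : 0 ≤ Rf F (X + cv (-s)) (X + cv (-s2)) (Y + cv (-t1)) (Y + cv (-t)) := by
        refine Rf_nonneg hJ (vle_shift (by simp only [neg_le_neg_iff]; exact min_le_left _ _))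
          (hord s2 t1 hs20.le ht12) (vle_shift (by linarith))
      have e1 : (F (X + cv (-s2), Y + cv (-t1)) : ℤ) = L := by
        have h1 : φ t1 s2 = ψ t1 := hstv t1 ht11 ht12 s2 hs20
          (le_trans (min_le_left _ _) hss)
        exact h1
      have e2 : (F (X + cv (-s), Y + cv (-t1)) : ℤ) = L := by
        have h1 : φ t1 s = ψ t1 := hstv t1 ht11 ht12 s hs hss
        exact h1
      have e3 : (F (X + cv (-s2), Y + cv (-t)) : ℤ) = L := by
        have h1 : φ t s2 = ψ t := hstv t ht htW s2 hs20 (min_le_right _ _)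
        have h2 : ψ t = L := by rw [hL]; exact ht13 t ht htt
        rw [← h2]; exact h1
      unfold Rf at hR
      have : (F (X + cv (-s), Y + cv (-t)) : ℤ) = φ t s := rfl
      omega
    omega
  refine ⟨min sstar t1, lt_min hs1 ht11, le_trans (min_le_left _ _) hs2,
    fun s t s' t' a1 a2 a3 a4 a5 a6 a7 a8 => ?_⟩
  have h1 := key s t a1 a2 a3 a4
  have h2 := key s' t' a5 a6 a7 a8
  have h3 : φ t s = φ t' s' := by omega
  simp only [hφ] at h3; exact_mod_cast h3

end Aux2
section Aux3

variable {n : ℕ}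

/-- Same-direction corner constancy for `(s,t) ↦ F (X - s·𝟙, Y + t·𝟙)`. -/
lemma samedir_const {F : (Fin n → ℝ) × (Fin n → ℝ) → ℕ} (hM : Monot F)
    (X Y : Fin n → ℝ) (W : ℝ) (hW : 0 < W) (hsep : ∀ i, X i < Y i) :
    ∃ δ : ℝ, 0 < δ ∧ δ ≤ W ∧ ∀ s t s' t' : ℝ,
      0 < s → s ≤ δ → 0 < t → t ≤ δ → 0 < s' → s' ≤ δ → 0 < t' → t' ≤ δ →
      F (X + cv (-s), Y + cv t) = F (X + cv (-s'), Y + cv t') := by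
  have hord : ∀ a b : ℝ, a ≤ 0 → 0 ≤ b → vlt (X + cv a) (Y + cv b) := by
    intro a b ha hb i
    have := hsep i
    simp only [Pi.add_apply, cv_apply]; linarith
  set Φ : ℝ → ℤ := fun r => (F (X + cv (-r), Y + cv r) : ℤ) with hΦ
  have hanti : ∀ r r' : ℝ, 0 < r → r ≤ r' → Φ r' ≤ Φ r := by
    intro r r' hr hrr
    have h1 : (F (X + cv (-r'), Y + cv r') : ℤ) ≤ F (X + cv (-r), Y + cv r') := by
      exact_mod_cast hM.1 _ _ _ (vle_shift (by linarith)) (hord _ _ (by linarith) (by linarith))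
    have h2 : (F (X + cv (-r), Y + cv r') : ℤ) ≤ F (X + cv (-r), Y + cv r) := by
      exact_mod_cast hM.2 _ _ _ (hord _ _ (by linarith) (by linarith))
        (vle_shift (by linarith))
    simp only [hΦ]; linarith
  have hub : ∀ r : ℝ, 0 < r → Φ r ≤ (F (X, Y) : ℤ) := by
    intro r hr
    have h1 : (F (X + cv (-r), Y + cv r) : ℤ) ≤ F (X, Y + cv r) := by
      exact_mod_cast hM.1 (X + cv (-r)) X (Y + cv r)
        (fun i => by simp only [Pi.add_apply, cv_apply]; linarith)
        (fun i => by simp only [Pi.add_apply, cv_apply]; have := hsep i; linarith)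
    have h2 : (F (X, Y + cv r) : ℤ) ≤ F (X, Y) := by
      exact_mod_cast hM.2 X Y (Y + cv r)
        (fun i => hsep i)
        (fun i => by simp only [Pi.add_apply, cv_apply]; linarith)
    simp only [hΦ]; linarith
  obtain ⟨δ, hδ1, hδ2, hδ3⟩ := int_loc_const (fun r => - Φ r) W hW
    (fun r r' hr hrr hr' => neg_le_neg (hanti r r' hr hrr))
    (-(F (X, Y) : ℤ)) (fun r hr _ => neg_le_neg (hub r hr))
  have hconst : ∀ r : ℝ, 0 < r → r ≤ δ → Φ r = Φ δ := by
    intro r hr1 hr2; have := hδ3 r hr1 hr2; omega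
  have key : ∀ s t : ℝ, 0 < s → s ≤ δ → 0 < t → t ≤ δ →
      (F (X + cv (-s), Y + cv t) : ℤ) = Φ δ := by
    intro s t hs1 hs2 ht1 ht2
    set m := max s t with hm
    set m' := min s t with hm'
    have hm0 : 0 < m := lt_of_lt_of_le hs1 (le_max_left _ _)
    have hm'0 : 0 < m' := lt_min hs1 ht1
    have hmδ : m ≤ δ := max_le hs2 ht2
    have hlow : Φ m ≤ (F (X + cv (-s), Y + cv t) : ℤ) := by
      have h1 : (F (X + cv (-m), Y + cv m) : ℤ) ≤ F (X + cv (-s), Y + cv m) := by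
        exact_mod_cast hM.1 _ _ _ (vle_shift (by simp only [neg_le_neg_iff, hm]; exact le_max_left _ _))
          (hord _ _ (by linarith) (by linarith))
      have h2 : (F (X + cv (-s), Y + cv m) : ℤ) ≤ F (X + cv (-s), Y + cv t) := by
        exact_mod_cast hM.2 _ _ _ (hord _ _ (by linarith) (by linarith))
          (vle_shift (le_max_right _ _))
      simp only [hΦ]; linarith
    have hhigh : (F (X + cv (-s), Y + cv t) : ℤ) ≤ Φ m' := by
      have h1 : (F (X + cv (-s), Y + cv t) : ℤ) ≤ F (X + cv (-m'), Y + cv t) := by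
        exact_mod_cast hM.1 _ _ _ (vle_shift (by simp only [neg_le_neg_iff, hm']; exact min_le_left _ _))
          (hord _ _ (by linarith) (by linarith))
      have h2 : (F (X + cv (-m'), Y + cv t) : ℤ) ≤ F (X + cv (-m'), Y + cv m') := by
        exact_mod_cast hM.2 _ _ _ (hord _ _ (by linarith) (by linarith))
          (vle_shift (min_le_right _ _))
      simp only [hΦ]; linarith
    have e1 : Φ m = Φ δ := hconst m hm0 hmδ
    have e2 : Φ m' = Φ δ := hconst m' hm'0 (le_trans (min_le_left _ _) hs2)
    omega
  refine ⟨δ, hδ1, hδ2, fun s t s' t' a1 a2 a3 a4 a5 a6 a7 a8 => ?_⟩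
  have h1 := key s t a1 a2 a3 a4
  have h2 := key s' t' a5 a6 a7 a8
  exact_mod_cast h1.trans h2.symm

/-- dual function: swaps and negates, preserving the axioms -/
lemma dual_monot {F : (Fin n → ℝ) × (Fin n → ℝ) → ℕ} (hM : Monot F) :
    Monot (fun p : (Fin n → ℝ) × (Fin n → ℝ) => F (-p.2, -p.1)) := by
  constructor
  · intro a a' b hle hlt
    exact hM.2 (-b) (-a') (-a) (fun i => by simp only [Pi.neg_apply]; exact neg_lt_neg (hlt i))
      (fun i => by simp only [Pi.neg_apply]; exact neg_le_neg (hle i))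
  · intro a b b' hlt hle
    exact hM.1 (-b') (-b) (-a) (fun i => by simp only [Pi.neg_apply]; exact neg_le_neg (hle i))
      (fun i => by simp only [Pi.neg_apply]; exact neg_lt_neg (hlt i))

lemma dual_jump {F : (Fin n → ℝ) × (Fin n → ℝ) → ℕ} (hJ : JumpMonot F) :
    JumpMonot (fun p : (Fin n → ℝ) × (Fin n → ℝ) => F (-p.2, -p.1)) := by
  intro u1 u2 v1 v2 h1 h2 h3
  have := hJ (-v2) (-v1) (-u2) (-u1)
    (fun i => by simp only [Pi.neg_apply]; exact neg_le_neg (h3 i))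
    (fun i => by simp only [Pi.neg_apply]; exact neg_lt_neg (h2 i))
    (fun i => by simp only [Pi.neg_apply]; exact neg_le_neg (h1 i))
  simp only []
  linarith

end Aux3
section Aux4

variable {n : ℕ}

structure BoxQ (n : ℕ) where
  A1 : Fin n → ℝ
  A2 : Fin n → ℝ
  B1 : Fin n → ℝ
  B2 : Fin n → ℝ

noncomputable def midv (x y : Fin n → ℝ) : Fin n → ℝ := fun i => (x i + y i)/2

def GoodBox (g : (Fin n → ℝ) × (Fin n → ℝ) → ℕ) (B : BoxQ n) : Prop :=
  vle B.A1 B.A2 ∧ vlt B.A2 B.B1 ∧ vle B.B1 B.B2 ∧ 1 ≤ Rf g B.A1 B.A2 B.B1 B.B2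

lemma Rf_split (g : (Fin n → ℝ) × (Fin n → ℝ) → ℕ) (a1 a2 b1 b2 : Fin n → ℝ) :
    Rf g a1 a2 b1 b2 =
      Rf g a1 (midv a1 a2) b1 (midv b1 b2) + Rf g (midv a1 a2) a2 b1 (midv b1 b2) +
      Rf g a1 (midv a1 a2) (midv b1 b2) b2 + Rf g (midv a1 a2) a2 (midv b1 b2) b2 := by
  unfold Rf; ring

lemma subdiv {g : (Fin n → ℝ) × (Fin n → ℝ) → ℕ} (hJ : JumpMonot g)
    (B : BoxQ n) (hB : GoodBox g B) :
    ∃ B' : BoxQ n, GoodBox g B' ∧ vle B.A1 B'.A1 ∧ vle B'.A2 B.A2 ∧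
      vle B.B1 B'.B1 ∧ vle B'.B2 B.B2 ∧
      (∀ i, B'.A2 i - B'.A1 i = (B.A2 i - B.A1 i)/2) ∧
      (∀ i, B'.B2 i - B'.B1 i = (B.B2 i - B.B1 i)/2) := by
  obtain ⟨h12, hm, h34, hR⟩ := hB
  set am := midv B.A1 B.A2 with ham
  set bm := midv B.B1 B.B2 with hbm
  have hA1am : vle B.A1 am := fun i => by simp only [ham, midv]; have := h12 i; linarith
  have hamA2 : vle am B.A2 := fun i => by simp only [ham, midv]; have := h12 i; linarith
  have hB1bm : vle B.B1 bm := fun i => by simp only [hbm, midv]; have := h34 i; linarith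
  have hbmB2 : vle bm B.B2 := fun i => by simp only [hbm, midv]; have := h34 i; linarith
  have hamB1 : vlt am B.B1 := vlt_of_vle_vlt hamA2 hm
  have hA2bm : vlt B.A2 bm := vlt_of_vlt_vle hm hB1bm
  have hambm : vlt am bm := vlt_of_vle_vlt hamA2 hA2bm
  have hN11 : 0 ≤ Rf g B.A1 am B.B1 bm := Rf_nonneg hJ hA1am hamB1 hB1bm
  have hN21 : 0 ≤ Rf g am B.A2 B.B1 bm := Rf_nonneg hJ hamA2 hm hB1bm
  have hN12 : 0 ≤ Rf g B.A1 am bm B.B2 := Rf_nonneg hJ hA1am hambm hbmB2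
  have hN22 : 0 ≤ Rf g am B.A2 bm B.B2 := Rf_nonneg hJ hamA2 hA2bm hbmB2
  have hsum := Rf_split g B.A1 B.A2 B.B1 B.B2
  have hmidA : ∀ i, am i - B.A1 i = (B.A2 i - B.A1 i)/2 := fun i => by
    simp only [ham, midv]; ring
  have hmidA' : ∀ i, B.A2 i - am i = (B.A2 i - B.A1 i)/2 := fun i => by
    simp only [ham, midv]; ring
  have hmidB : ∀ i, bm i - B.B1 i = (B.B2 i - B.B1 i)/2 := fun i => by
    simp only [hbm, midv]; ring
  have hmidB' : ∀ i, B.B2 i - bm i = (B.B2 i - B.B1 i)/2 := fun i => by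
    simp only [hbm, midv]; ring
  have hcase : 1 ≤ Rf g B.A1 am B.B1 bm ∨ 1 ≤ Rf g am B.A2 B.B1 bm ∨
      1 ≤ Rf g B.A1 am bm B.B2 ∨ 1 ≤ Rf g am B.A2 bm B.B2 := by
    by_contra hcon
    push_neg at hcon
    obtain ⟨c1, c2, c3, c4⟩ := hcon
    linarith
  rcases hcase with hc | hc | hc | hc
  · exact ⟨⟨B.A1, am, B.B1, bm⟩, ⟨hA1am, hamB1, hB1bm, hc⟩, vle_refl _, hamA2,
      vle_refl _, hbmB2, hmidA, hmidB⟩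
  · exact ⟨⟨am, B.A2, B.B1, bm⟩, ⟨hamA2, hm, hB1bm, hc⟩, hA1am, vle_refl _,
      vle_refl _, hbmB2, hmidA', hmidB⟩
  · exact ⟨⟨B.A1, am, bm, B.B2⟩, ⟨hA1am, hambm, hbmB2, hc⟩, vle_refl _, hamA2,
      hB1bm, vle_refl _, hmidA, hmidB'⟩
  · exact ⟨⟨am, B.A2, bm, B.B2⟩, ⟨hamA2, hA2bm, hbmB2, hc⟩, hA1am, vle_refl _,
      hB1bm, vle_refl _, hmidA', hmidB'⟩

lemma cp_of_box (i0 : Fin n) {g : (Fin n → ℝ) × (Fin n → ℝ) → ℕ} (hJ : JumpMonot g)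
    {a1 a2 b1 b2 : Fin n → ℝ} (h12 : vle a1 a2) (hm : vlt a2 b1) (h34 : vle b1 b2)
    (hR : 1 ≤ Rf g a1 a2 b1 b2) :
    ∃ x y : Fin n → ℝ, vle a1 x ∧ vle x a2 ∧ vle b1 y ∧ vle y b2 ∧
      vlt x y ∧ 0 < mult g x y := by
  classical
  set B0 : BoxQ n := ⟨a1, a2, b1, b2⟩ with hB0
  set step : BoxQ n → BoxQ n :=
    fun B => if h : GoodBox g B then (subdiv hJ B h).choose else B with hstepdef
  obtain ⟨s, hs0, hsucc⟩ : ∃ s : ℕ → BoxQ n, s 0 = B0 ∧ ∀ k, s (k+1) = step (s k) :=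
    ⟨fun k => Nat.recAux B0 (fun _ B => step B) k, rfl, fun _ => rfl⟩
  have hgood : ∀ k, GoodBox g (s k) := by
    intro k
    induction k with
    | zero => rw [hs0]; exact ⟨h12, hm, h34, hR⟩
    | succ k ih =>
      rw [hsucc k, hstepdef]
      simp only [dif_pos ih]
      exact (Classical.choose_spec (subdiv hJ (s k) ih)).1
  have hstepspec : ∀ k, vle (s k).A1 (s (k+1)).A1 ∧ vle (s (k+1)).A2 (s k).A2 ∧
      vle (s k).B1 (s (k+1)).B1 ∧ vle (s (k+1)).B2 (s k).B2 ∧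
      (∀ i, (s (k+1)).A2 i - (s (k+1)).A1 i = ((s k).A2 i - (s k).A1 i)/2) ∧
      (∀ i, (s (k+1)).B2 i - (s (k+1)).B1 i = ((s k).B2 i - (s k).B1 i)/2) := by
    intro k
    have hk := hgood k
    rw [hsucc k, hstepdef]
    simp only [dif_pos hk]
    obtain ⟨_, p1, p2, p3, p4, p5, p6⟩ := Classical.choose_spec (subdiv hJ (s k) hk)
    exact ⟨p1, p2, p3, p4, p5, p6⟩
  have hA1mono : ∀ k l, k ≤ l → vle (s k).A1 (s l).A1 := by
    intro k l hkl
    induction l, hkl using Nat.le_induction with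
    | base => exact vle_refl _
    | succ l hkl ih => exact vle_trans ih (hstepspec l).1
  have hA2mono : ∀ k l, k ≤ l → vle (s l).A2 (s k).A2 := by
    intro k l hkl
    induction l, hkl using Nat.le_induction with
    | base => exact vle_refl _
    | succ l hkl ih => exact vle_trans (hstepspec l).2.1 ih
  have hB1mono : ∀ k l, k ≤ l → vle (s k).B1 (s l).B1 := by
    intro k l hkl
    induction l, hkl using Nat.le_induction with
    | base => exact vle_refl _
    | succ l hkl ih => exact vle_trans ih (hstepspec l).2.2.1
  have hB2mono : ∀ k l, k ≤ l → vle (s l).B2 (s k).B2 := by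
    intro k l hkl
    induction l, hkl using Nat.le_induction with
    | base => exact vle_refl _
    | succ l hkl ih => exact vle_trans (hstepspec l).2.2.2.1 ih
  have hwA : ∀ k i, (s k).A2 i - (s k).A1 i = (a2 i - a1 i)/2^k := by
    intro k
    induction k with
    | zero => intro i; rw [hs0]; simp [hB0]
    | succ k ih =>
      intro i
      rw [(hstepspec k).2.2.2.2.1 i, ih i, pow_succ]
      ring
  have hwB : ∀ k i, (s k).B2 i - (s k).B1 i = (b2 i - b1 i)/2^k := by
    intro k
    induction k with
    | zero => intro i; rw [hs0]; simp [hB0]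
    | succ k ih =>
      intro i
      rw [(hstepspec k).2.2.2.2.2 i, ih i, pow_succ]
      ring
  have crossA : ∀ k l, vle (s k).A1 (s l).A2 := by
    intro k l
    rcases le_total k l with h | h
    · exact vle_trans (hA1mono k l h) (hgood l).1
    · exact vle_trans (hgood k).1 (hA2mono l k h)
  have crossB : ∀ k l, vle (s k).B1 (s l).B2 := by
    intro k l
    rcases le_total k l with h | h
    · exact vle_trans (hB1mono k l h) (hgood l).2.2.1
    · exact vle_trans (hgood k).2.2.1 (hB2mono l k h)
  set x : Fin n → ℝ := fun i => sSup (Set.range fun k => (s k).A1 i) with hx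
  set y : Fin n → ℝ := fun i => sSup (Set.range fun k => (s k).B1 i) with hy
  have hbddx : ∀ i, BddAbove (Set.range fun k => (s k).A1 i) := by
    intro i
    exact ⟨(s 0).A2 i, by rintro r ⟨k, rfl⟩; exact crossA k 0 i⟩
  have hbddy : ∀ i, BddAbove (Set.range fun k => (s k).B1 i) := by
    intro i
    exact ⟨(s 0).B2 i, by rintro r ⟨k, rfl⟩; exact crossB k 0 i⟩
  have hx1 : ∀ k i, (s k).A1 i ≤ x i := fun k i => le_csSup (hbddx i) ⟨k, rfl⟩
  have hx2 : ∀ k i, x i ≤ (s k).A2 i := by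
    intro k i
    apply csSup_le (Set.range_nonempty _)
    rintro r ⟨l, rfl⟩
    exact crossA l k i
  have hy1 : ∀ k i, (s k).B1 i ≤ y i := fun k i => le_csSup (hbddy i) ⟨k, rfl⟩
  have hy2 : ∀ k i, y i ≤ (s k).B2 i := by
    intro k i
    apply csSup_le (Set.range_nonempty _)
    rintro r ⟨l, rfl⟩
    exact crossB l k i
  have hs0A1 : (s 0).A1 = a1 := by rw [hs0]
  have hs0A2 : (s 0).A2 = a2 := by rw [hs0]
  have hs0B1 : (s 0).B1 = b1 := by rw [hs0]
  have hs0B2 : (s 0).B2 = b2 := by rw [hs0]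
  have hxy : vlt x y := by
    intro i
    calc x i ≤ (s 0).A2 i := hx2 0 i
    _ < (s 0).B1 i := (hgood 0).2.1 i
    _ ≤ y i := hy1 0 i
  refine ⟨x, y, ?_, ?_, ?_, ?_, hxy, ?_⟩
  · intro i; rw [← hs0A1]; exact hx1 0 i
  · intro i; rw [← hs0A2]; exact hx2 0 i
  · intro i; rw [← hs0B1]; exact hy1 0 i
  · intro i; rw [← hs0B2]; exact hy2 0 i
  apply mult_pos_of hxy
  intro e he hee
  have hFne : (Finset.univ : Finset (Fin n)).Nonempty := ⟨i0, Finset.mem_univ i0⟩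
  set emin := Finset.univ.inf' hFne e with hemin
  have hemin0 : 0 < emin := by
    rw [hemin, Finset.lt_inf'_iff]
    intro i _
    have := he i
    simpa using this
  have heminle : ∀ i, emin ≤ e i := fun i => Finset.inf'_le e (Finset.mem_univ i)
  set Wm := Finset.univ.sup' hFne (fun i => max (a2 i - a1 i) (b2 i - b1 i)) with hWm
  have hWmle : ∀ i, a2 i - a1 i ≤ Wm ∧ b2 i - b1 i ≤ Wm := by
    intro i
    have hle : max (a2 i - a1 i) (b2 i - b1 i) ≤ Wm :=
      Finset.le_sup' (fun j => max (a2 j - a1 j) (b2 j - b1 j)) (Finset.mem_univ i)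
    constructor
    · exact le_trans (le_max_left _ _) hle
    · exact le_trans (le_max_right _ _) hle
  obtain ⟨k, hk⟩ : ∃ k : ℕ, Wm / emin < 2^k := pow_unbounded_of_one_lt (Wm/emin) one_lt_two
  have hWk : Wm / 2^k < emin := by
    have h2k : (0:ℝ) < 2^k := by positivity
    rw [div_lt_iff₀ h2k]
    rw [div_lt_iff₀ hemin0] at hk
    linarith [hk]
  have hwAk : ∀ i, (s k).A2 i - (s k).A1 i < emin := by
    intro i
    rw [hwA k i]
    have h2k : (0:ℝ) < 2^k := by positivity
    have : (a2 i - a1 i)/2^k ≤ Wm / 2^k := by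
      apply (div_le_div_iff_of_pos_right h2k).mpr (hWmle i).1
    linarith
  have hwBk : ∀ i, (s k).B2 i - (s k).B1 i < emin := by
    intro i
    rw [hwB k i]
    have h2k : (0:ℝ) < 2^k := by positivity
    have : (b2 i - b1 i)/2^k ≤ Wm / 2^k := by
      apply (div_le_div_iff_of_pos_right h2k).mpr (hWmle i).2
    linarith
  rw [muE_eq_Rf]
  have hcont := Rf_mono (a1 := x - e) (a1' := (s k).A1) (a2' := (s k).A2) (a2 := x + e)
      (b1 := y - e) (b1' := (s k).B1) (b2' := (s k).B2) (b2 := y + e) hJ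
      (fun i => by
        have h1 := hx2 k i
        have h2 := heminle i
        have h3 := hwAk i
        simp only [Pi.sub_apply]
        linarith)
      (hgood k).1
      (fun i => by
        have h1 := hx1 k i
        have h2 := heminle i
        have h3 := hwAk i
        simp only [Pi.add_apply]
        linarith)
      hee
      (fun i => by
        have h1 := hy2 k i
        have h2 := heminle i
        have h3 := hwBk i
        simp only [Pi.sub_apply]
        linarith)
      (hgood k).2.2.1
      (fun i => by
        have h1 := hy1 k i
        have h2 := heminle i
        have h3 := hwBk i
        simp only [Pi.add_apply]
        linarith)
  have := (hgood k).2.2.2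
  linarith

end Aux4
section Aux5

variable {n : ℕ}

lemma cp_limit (i0 : Fin n) {g : (Fin n → ℝ) × (Fin n → ℝ) → ℕ} (hJ : JumpMonot g)
    (u v : Fin n → ℝ) (D c0 : ℝ) (hD : 0 ≤ D) (hc0 : 0 < c0)
    (hseq : ∀ m : ℕ, ∃ x y : Fin n → ℝ, 0 < mult g x y ∧
      (∀ i, |u i - x i| ≤ D + 1/(m+1)) ∧ (∀ i, |v i - y i| ≤ D + 1/(m+1)) ∧
      (∀ i, c0 ≤ y i - x i)) :
    ∃ x y : Fin n → ℝ, vlt x y ∧ 0 < mult g x y ∧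
      (∀ i, |u i - x i| ≤ D) ∧ (∀ i, |v i - y i| ≤ D) := by
  classical
  choose xm ym hm1 hm2 hm3 hm4 using hseq
  set q : ℕ → (Fin n → ℝ) × (Fin n → ℝ) := fun m => (xm m, ym m) with hqdef
  set RR := max ‖u‖ ‖v‖ + (D+1) with hRR
  have hq : ∀ m, q m ∈ Metric.closedBall (0 : (Fin n → ℝ) × (Fin n → ℝ)) RR := by
    intro m
    rw [Metric.mem_closedBall, dist_zero_right]
    have hfrac : 1/((m:ℝ)+1) ≤ 1 := by
      rw [div_le_one (by positivity)]
      linarith [Nat.cast_nonneg (α := ℝ) m]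
    have hx : ‖xm m‖ ≤ ‖u‖ + (D+1) := by
      have h1 : ‖xm m - u‖ ≤ D + 1 := by
        rw [pi_norm_le_iff_of_nonneg (by linarith)]
        intro i
        rw [Real.norm_eq_abs, Pi.sub_apply, abs_sub_comm]
        have := hm2 m i
        linarith
      have h2 := norm_sub_norm_le (xm m) u
      linarith
    have hy : ‖ym m‖ ≤ ‖v‖ + (D+1) := by
      have h1 : ‖ym m - v‖ ≤ D + 1 := by
        rw [pi_norm_le_iff_of_nonneg (by linarith)]
        intro i
        rw [Real.norm_eq_abs, Pi.sub_apply, abs_sub_comm]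
        have := hm3 m i
        linarith
      have h2 := norm_sub_norm_le (ym m) v
      linarith
    have : ‖q m‖ = max ‖xm m‖ ‖ym m‖ := rfl
    rw [this]
    apply max_le
    · calc ‖xm m‖ ≤ ‖u‖ + (D+1) := hx
        _ ≤ RR := by rw [hRR]; gcongr; exact le_max_left _ _
    · calc ‖ym m‖ ≤ ‖v‖ + (D+1) := hy
        _ ≤ RR := by rw [hRR]; gcongr; exact le_max_right _ _
  obtain ⟨ℓ, -, φ, hφ, hconv⟩ :=
    tendsto_subseq_of_bounded (Metric.isBounded_closedBall) hq
  set X := ℓ.1 with hX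
  set Y := ℓ.2 with hY
  have hclose : ∀ r : ℝ, 0 < r → ∃ m : ℕ,
      (∀ i, |xm (φ m) i - X i| < r) ∧ (∀ i, |ym (φ m) i - Y i| < r) ∧
      1/((φ m : ℝ)+1) < r := by
    intro r hr
    obtain ⟨N, hN⟩ := Metric.tendsto_atTop.mp hconv r hr
    obtain ⟨M, hM⟩ := exists_nat_one_div_lt hr
    set m := max N M with hmdef
    refine ⟨m, ?_, ?_, ?_⟩
    · intro i
      have h1 := hN m (le_max_left _ _)
      have h2 : dist (xm (φ m)) X ≤ dist (q (φ m)) ℓ := by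
        rw [Prod.dist_eq]; exact le_max_left _ _
      have h3 := dist_le_pi_dist (xm (φ m)) X i
      rw [Real.dist_eq] at h3
      calc |xm (φ m) i - X i| ≤ dist (xm (φ m)) X := h3
        _ ≤ dist (q (φ m)) ℓ := h2
        _ < r := h1
    · intro i
      have h1 := hN m (le_max_left _ _)
      have h2 : dist (ym (φ m)) Y ≤ dist (q (φ m)) ℓ := by
        rw [Prod.dist_eq]; exact le_max_right _ _
      have h3 := dist_le_pi_dist (ym (φ m)) Y i
      rw [Real.dist_eq] at h3
      calc |ym (φ m) i - Y i| ≤ dist (ym (φ m)) Y := h3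
        _ ≤ dist (q (φ m)) ℓ := h2
        _ < r := h1
    · have h1 : (m:ℝ) + 1 ≤ (φ m : ℝ) + 1 := by
        have h0 : m ≤ φ m := hφ.le_apply
        have : (m:ℝ) ≤ (φ m : ℝ) := by exact_mod_cast h0
        linarith
      have h2 : 1/((φ m : ℝ)+1) ≤ 1/((m:ℝ)+1) := by
        apply one_div_le_one_div_of_le (by positivity) h1
      have h3 : 1/((m:ℝ)+1) ≤ 1/((M:ℝ)+1) := by
        apply one_div_le_one_div_of_le (by positivity)
        have : (M:ℝ) ≤ m := by exact_mod_cast le_max_right N M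
        linarith
      linarith
  have hdx : ∀ i, |u i - X i| ≤ D := by
    intro i
    apply le_of_forall_pos_le_add
    intro r hr
    obtain ⟨m, hc1, hc2, hc3⟩ := hclose (r/2) (by linarith)
    have h1 := hm2 (φ m) i
    have h2 := hc1 i
    have h3 : |u i - X i| ≤ |u i - xm (φ m) i| + |xm (φ m) i - X i| := abs_sub_le _ _ _
    linarith
  have hdy : ∀ i, |v i - Y i| ≤ D := by
    intro i
    apply le_of_forall_pos_le_add
    intro r hr
    obtain ⟨m, hc1, hc2, hc3⟩ := hclose (r/2) (by linarith)
    have h1 := hm3 (φ m) i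
    have h2 := hc2 i
    have h3 : |v i - Y i| ≤ |v i - ym (φ m) i| + |ym (φ m) i - Y i| := abs_sub_le _ _ _
    linarith
  have hgap : ∀ i, c0 ≤ Y i - X i := by
    intro i
    apply le_of_forall_pos_le_add
    intro r hr
    obtain ⟨m, hc1, hc2, hc3⟩ := hclose (r/2) (by linarith)
    have h1 := hm4 (φ m) i
    have h2 := hc1 i
    have h3 := hc2 i
    have h4 := abs_lt.mp h2
    have h5 := abs_lt.mp h3
    linarith
  have hvlt : vlt X Y := fun i => by have := hgap i; linarith
  refine ⟨X, Y, hvlt, ?_, hdx, hdy⟩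
  apply mult_pos_of hvlt
  intro e he hee
  have hFne : (Finset.univ : Finset (Fin n)).Nonempty := ⟨i0, Finset.mem_univ i0⟩
  set emin := Finset.univ.inf' hFne e with hemin
  have hemin0 : 0 < emin := by
    rw [hemin, Finset.lt_inf'_iff]
    intro i _
    have := he i
    simpa using this
  have heminle : ∀ i, emin ≤ e i := fun i => Finset.inf'_le e (Finset.mem_univ i)
  set r := min (emin/2) (c0/4) with hrdef
  have hr0 : 0 < r := lt_min (by linarith) (by linarith)
  have hr1 : 2*r ≤ emin := by
    have := min_le_left (emin/2) (c0/4)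
    rw [hrdef]; linarith
  have hr2 : 2*r < c0 := by
    have := min_le_right (emin/2) (c0/4)
    rw [hrdef]; linarith
  obtain ⟨m, hc1, hc2, -⟩ := hclose r hr0
  have hin : 1 ≤ muE g (cv r) (xm (φ m)) (ym (φ m)) := by
    apply one_le_muE_of_mult_pos hJ (hm1 (φ m))
    · intro i; simp only [Pi.zero_apply, cv_apply]; exact hr0
    · intro i
      simp only [Pi.add_apply, Pi.sub_apply, cv_apply]
      have := hm4 (φ m) i
      linarith
  rw [muE_eq_Rf] at hin ⊢
  have hcont := Rf_mono (a1 := X - e) (a1' := xm (φ m) - cv r) (a2' := xm (φ m) + cv r)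
      (a2 := X + e) (b1 := Y - e) (b1' := ym (φ m) - cv r) (b2' := ym (φ m) + cv r)
      (b2 := Y + e) hJ
      (fun i => by
        have h1 := (abs_lt.mp (hc1 i)).1
        have h2 := heminle i
        simp only [Pi.sub_apply, cv_apply]
        linarith)
      (fun i => by simp only [Pi.sub_apply, Pi.add_apply, cv_apply]; linarith)
      (fun i => by
        have h1 := (abs_lt.mp (hc1 i)).2
        have h2 := heminle i
        simp only [Pi.add_apply, cv_apply]
        linarith)
      hee
      (fun i => by
        have h1 := (abs_lt.mp (hc2 i)).1
        have h2 := heminle i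
        simp only [Pi.sub_apply, cv_apply]
        linarith)
      (fun i => by simp only [Pi.sub_apply, Pi.add_apply, cv_apply]; linarith)
      (fun i => by
        have h1 := (abs_lt.mp (hc2 i)).2
        have h2 := heminle i
        simp only [Pi.add_apply, cv_apply]
        linarith)
  linarith

end Aux5

set_option maxHeartbeats 1600000 in
/-- Proposition 4.4 (stability of proper cornerpoints): for an interpolating family of
pairwise-interleaved admissible tame functions, every proper cornerpoint of `β 0` either is
`ε`-close to the diagonal (i.e. `min_i (v i − u i) ≤ 2ε`) or is `ε`-close to a proper
cornerpoint of `β ε`. -/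
theorem stability_of_proper_cornerpoints
    (n : ℕ) (hn : 0 < n) (ε : ℝ) (hε : 0 ≤ ε)
    (β : ℝ → (Fin n → ℝ) × (Fin n → ℝ) → ℕ)
    (hadm : ∀ τ ∈ Set.Icc (0:ℝ) ε, Admissible (β τ) ∧ Tame (β τ))
    (hint : ∀ τ ∈ Set.Icc (0:ℝ) ε, ∀ τ' ∈ Set.Icc (0:ℝ) ε,
      Interleaved (β τ) (β τ') |τ - τ'|)
    (u v : Fin n → ℝ) (huv : vlt u v) (hcp : 0 < mult (β 0) u v) :
    (⨅ i, (v i - u i)) ≤ 2 * ε ∨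
    ∃ u' v' : Fin n → ℝ, vlt u' v' ∧ 0 < mult (β ε) u' v' ∧
      max ‖u - u'‖ ‖v - v'‖ ≤ ε := by
  classical
  by_cases hd : (⨅ i, (v i - u i)) ≤ 2 * ε
  · left; exact hd
  right
  push_neg at hd
  have i0 : Fin n := ⟨0, hn⟩
  have hbddg : BddBelow (Set.range fun i => v i - u i) :=
    (Set.finite_range _).bddBelow
  have hgapinf : ∀ i, (⨅ j, (v j - u j)) ≤ v i - u i := fun i => ciInf_le hbddg i
  set χ := ((⨅ i, (v i - u i)) - 2*ε)/100 with hχdef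
  have hχ : 0 < χ := by rw [hχdef]; linarith
  have hE : ∀ i, 2*ε + 100*χ ≤ v i - u i := by
    intro i
    have h1 := hgapinf i
    rw [hχdef]
    linarith
  have hvab : ∀ a b : ℝ, a - b < 2*ε + 100*χ → vlt (u + cv a) (v + cv b) := by
    intro a b hab i
    have := hE i
    simp only [Pi.add_apply, cv_apply]
    linarith
  -- the tracking set
  set S : Set ℝ := {τ | (0 ≤ τ ∧ τ ≤ ε) ∧ ∃ x y : Fin n → ℝ, vlt x y ∧
      0 < mult (β τ) x y ∧ (∀ i, |u i - x i| ≤ τ) ∧ (∀ i, |v i - y i| ≤ τ)} with hSdef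
  have h0S : (0:ℝ) ∈ S := by
    refine ⟨⟨le_rfl, hε⟩, u, v, huv, hcp, fun i => by simp, fun i => by simp⟩
  have hSne : S.Nonempty := ⟨0, h0S⟩
  have hSbdd : BddAbove S := ⟨ε, fun τ hτ => hτ.1.2⟩
  set T := sSup S with hTdef
  have hT0 : 0 ≤ T := le_csSup hSbdd h0S
  have hTε : T ≤ ε := csSup_le hSne (fun τ hτ => hτ.1.2)
  -- the function at time T and its zones
  set F := β T with hFdef
  have hadmT := (hadm T ⟨hT0, hTε⟩).1
  have hMF : Monot F := hadmT.1
  have hJF : JumpMonot F := hadmT.2.1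
  set FF : ℝ → ℝ → ℤ := fun a b => (F (u + cv a, v + cv b) : ℤ) with hFF
  have hRfF : ∀ a1 a2 b1 b2 : ℝ, Rf F (u + cv a1) (u + cv a2) (v + cv b1) (v + cv b2) =
      FF a2 b1 - FF a1 b1 - FF a2 b2 + FF a1 b2 := fun _ _ _ _ => rfl
  -- Zone ab : (s,t) ↦ F(u - s, v - t)
  obtain ⟨δab, hδab0, hδabχ, habraw⟩ := mixed_const hMF hJF (u + cv (-T)) (v + cv (-T)) χ hχ
    (by intro i; simp only [Pi.add_apply, cv_apply]; have := hE i; linarith)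
  have Hab : ∀ a b a' b' : ℝ, T < a → a ≤ T + δab → T < b → b ≤ T + δab →
      T < a' → a' ≤ T + δab → T < b' → b' ≤ T + δab → FF (-a) (-b) = FF (-a') (-b') := by
    intro a b a' b' h1 h2 h3 h4 h5 h6 h7 h8
    have hr := habraw (a - T) (b - T) (a' - T) (b' - T)
      (by linarith) (by linarith) (by linarith) (by linarith)
      (by linarith) (by linarith) (by linarith) (by linarith)
    rw [shift_shift, shift_shift, shift_shift, shift_shift] at hr
    rw [show (-T + -(a-T) : ℝ) = -a from by ring, show (-T + -(b-T) : ℝ) = -b from by ring,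
      show (-T + -(a'-T) : ℝ) = -a' from by ring,
      show (-T + -(b'-T) : ℝ) = -b' from by ring] at hr
    simp only [hFF]
    exact_mod_cast hr
  -- Zone a : (s,t) ↦ F(u - s, v + t)
  obtain ⟨δza, hδza0, hδzaχ, hzaraw⟩ := samedir_const hMF (u + cv (-T)) (v + cv T) χ hχ
    (by intro i; simp only [Pi.add_apply, cv_apply]; have := hE i; linarith)
  have Hza : ∀ a b a' b' : ℝ, T < a → a ≤ T + δza → T < b → b ≤ T + δza →
      T < a' → a' ≤ T + δza → T < b' → b' ≤ T + δza → FF (-a) b = FF (-a') b' := by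
    intro a b a' b' h1 h2 h3 h4 h5 h6 h7 h8
    have hr := hzaraw (a - T) (b - T) (a' - T) (b' - T)
      (by linarith) (by linarith) (by linarith) (by linarith)
      (by linarith) (by linarith) (by linarith) (by linarith)
    rw [shift_shift, shift_shift, shift_shift, shift_shift] at hr
    rw [show (-T + -(a-T) : ℝ) = -a from by ring, show (T + (b-T) : ℝ) = b from by ring,
      show (-T + -(a'-T) : ℝ) = -a' from by ring,
      show (T + (b'-T) : ℝ) = b' from by ring] at hr
    simp only [hFF]
    exact_mod_cast hr
  -- Zone 3 : (s,t) ↦ F(u + s, v + t), via duality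
  obtain ⟨δz3, hδz30, hδz3χ, hz3raw⟩ := mixed_const (dual_monot hMF) (dual_jump hJF)
    ((-v) + cv (-T)) ((-u) + cv (-T)) χ hχ
    (by intro i; simp only [Pi.add_apply, cv_apply, Pi.neg_apply]; have := hE i; linarith)
  have Hz3 : ∀ a b a' b' : ℝ, T < a → a ≤ T + δz3 → T < b → b ≤ T + δz3 →
      T < a' → a' ≤ T + δz3 → T < b' → b' ≤ T + δz3 → FF a b = FF a' b' := by
    intro a b a' b' h1 h2 h3 h4 h5 h6 h7 h8
    have hr := hz3raw (b - T) (a - T) (b' - T) (a' - T)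
      (by linarith) (by linarith) (by linarith) (by linarith)
      (by linarith) (by linarith) (by linarith) (by linarith)
    rw [shift_shift, shift_shift, shift_shift, shift_shift] at hr
    rw [show (-T + -(b-T) : ℝ) = -b from by ring, show (-T + -(a-T) : ℝ) = -a from by ring,
      show (-T + -(b'-T) : ℝ) = -b' from by ring,
      show (-T + -(a'-T) : ℝ) = -a' from by ring] at hr
    simp only [neg_shift] at hr
    rw [show (-(-a) : ℝ) = a from by ring, show (-(-b) : ℝ) = b from by ring,
      show (-(-a') : ℝ) = a' from by ring, show (-(-b') : ℝ) = b' from by ring] at hr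
    simp only [hFF]
    exact_mod_cast hr
  set δs := min δab (min δza δz3) with hδs
  have hδs0 : 0 < δs := lt_min hδab0 (lt_min hδza0 hδz30)
  have hδsab : δs ≤ δab := min_le_left _ _
  have hδsza : δs ≤ δza := le_trans (min_le_right _ _) (min_le_left _ _)
  have hδsz3 : δs ≤ δz3 := le_trans (min_le_right _ _) (min_le_right _ _)
  have hδsχ : δs ≤ χ := le_trans hδsab hδabχ
  -- Closedness: T ∈ S (a proper cornerpoint of β T within distance T)
  have hGoodT : ∃ x y : Fin n → ℝ, vlt x y ∧ 0 < mult F x y ∧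
      (∀ i, |u i - x i| ≤ T) ∧ (∀ i, |v i - y i| ≤ T) := by
    apply cp_limit i0 hJF u v T (98*χ) hT0 (by linarith)
    intro m
    set ρ := min (δs/4) (1/((m:ℝ)+1)) with hρdef
    have hρ0 : 0 < ρ := lt_min (by linarith) (by positivity)
    have hρδ : ρ ≤ δs/4 := min_le_left _ _
    have hρm : ρ ≤ 1/((m:ℝ)+1) := min_le_right _ _
    have hρχ : ρ ≤ χ/4 := by linarith
    obtain ⟨τ, hτS, hτgt⟩ := exists_lt_of_lt_csSup hSne (show T - ρ/4 < T by linarith)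
    have hτT : τ ≤ T := le_csSup hSbdd hτS
    set η := T - τ with hηdef
    have hη0 : 0 ≤ η := by rw [hηdef]; linarith
    have hηρ : η ≤ ρ/4 := by rw [hηdef]; linarith
    obtain ⟨⟨hτ0, hτε⟩, q1, q2, hq12, hqm, hqd1, hqd2⟩ := hτS
    set g := β τ with hgdef
    have hadmτ := (hadm τ ⟨hτ0, hτε⟩).1
    have hJg : JumpMonot g := hadmτ.2.1
    set GG : ℝ → ℝ → ℤ := fun a b => (g (u + cv a, v + cv b) : ℤ) with hGG
    have hRfg : ∀ a1 a2 b1 b2 : ℝ, Rf g (u + cv a1) (u + cv a2) (v + cv b1) (v + cv b2) =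
        GG a2 b1 - GG a1 b1 - GG a2 b2 + GG a1 b2 := fun _ _ _ _ => rfl
    have hILn : Interleaved F g η := by
      have h := hint T ⟨hT0, hTε⟩ τ ⟨hτ0, hτε⟩
      rwa [show |T - τ| = η from by rw [hηdef]; exact abs_of_nonneg (by linarith)] at h
    have hIL1 : ∀ a b : ℝ, a - b < 2*ε+100*χ → FF (a-η) (b+η) ≤ GG a b := by
      intro a b hab
      have h := (hILn (u + cv a) (v + cv b) (hvab a b hab)).1
      rw [shift_sub, shift_add] at h
      simp only [hFF, hGG]
      exact_mod_cast h
    have hIL2 : ∀ a b : ℝ, a - b < 2*ε+100*χ → GG (a-η) (b+η) ≤ FF a b := by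
      intro a b hab
      have h := (hILn (u + cv a) (v + cv b) (hvab a b hab)).2
      rw [shift_sub, shift_add] at h
      simp only [hFF, hGG]
      exact_mod_cast h
    -- the inner g-box contains the witness box of the cornerpoint of g
    have hgapq : ∀ i, 2*ε + 100*χ - 2*τ ≤ q2 i - q1 i := by
      intro i
      have h1 := hE i
      have h2 := abs_le.mp (hqd1 i)
      have h3 := abs_le.mp (hqd2 i)
      linarith [h2.1, h2.2, h3.1, h3.2]
    have hmu : 1 ≤ muE g (cv (ρ/2)) q1 q2 := by
      apply one_le_muE_of_mult_pos hJg hqm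
      · intro i; simp only [Pi.zero_apply, cv_apply]; linarith
      · intro i
        have := hgapq i
        simp only [Pi.add_apply, Pi.sub_apply, cv_apply]
        linarith
    rw [muE_eq_Rf] at hmu
    have hinner : 1 ≤ GG (T+ρ-η) (-(T+ρ-η)) - GG (-(T+ρ-η)) (-(T+ρ-η))
        - GG (T+ρ-η) (T+ρ-η) + GG (-(T+ρ-η)) (T+ρ-η) := by
      rw [← hRfg]
      refine le_trans hmu (Rf_mono hJg ?_ ?_ ?_ ?_ ?_ ?_ ?_)
      · intro i
        have h2 := abs_le.mp (hqd1 i)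
        simp only [Pi.add_apply, Pi.sub_apply, cv_apply]
        linarith [h2.1]
      · intro i; simp only [Pi.add_apply, Pi.sub_apply, cv_apply]; linarith
      · intro i
        have h2 := abs_le.mp (hqd1 i)
        simp only [Pi.add_apply, cv_apply]
        linarith [h2.2]
      · exact hvab (T+ρ-η) (-(T+ρ-η)) (by linarith)
      · intro i
        have h3 := abs_le.mp (hqd2 i)
        simp only [Pi.add_apply, Pi.sub_apply, cv_apply]
        linarith [h3.1]
      · intro i; simp only [Pi.add_apply, Pi.sub_apply, cv_apply]; linarith
      · intro i
        have h3 := abs_le.mp (hqd2 i)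
        simp only [Pi.add_apply, cv_apply]
        linarith [h3.2]
    -- corner estimates
    have c1 : GG (T+ρ-η) (-(T+ρ-η)) ≤ FF (T+ρ) (-(T+ρ)) := by
      have h := hIL2 (T+ρ) (-(T+ρ)) (by linarith)
      rw [show ((T+ρ) - η : ℝ) = T+ρ-η from by ring,
        show ((-(T+ρ)) + η : ℝ) = -(T+ρ-η) from by ring] at h
      exact h
    have c2 : FF (-(T+ρ)) (-(T+ρ)) ≤ GG (-(T+ρ-η)) (-(T+ρ-η)) := by
      have s1 := hIL1 (-(T+ρ)+η) (-(T+ρ)-η) (by linarith)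
      rw [show ((-(T+ρ)+η) - η : ℝ) = -(T+ρ) from by ring,
        show ((-(T+ρ)-η) + η : ℝ) = -(T+ρ) from by ring] at s1
      have s2 := hIL2 (-(T+ρ)+2*η) (-(T+ρ)-2*η) (by linarith)
      rw [show ((-(T+ρ)+2*η) - η : ℝ) = -(T+ρ)+η from by ring,
        show ((-(T+ρ)-2*η) + η : ℝ) = -(T+ρ)-η from by ring] at s2
      have s3 : FF (-(T+ρ)+2*η) (-(T+ρ)-2*η) = FF (-(T+ρ)) (-(T+ρ)+2*η) := by
        have h := Hab (T+ρ-2*η) (T+ρ+2*η) (T+ρ) (T+ρ-2*η)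
          (by linarith) (by linarith) (by linarith) (by linarith)
          (by linarith) (by linarith) (by linarith) (by linarith)
        rw [show (-(T+ρ-2*η) : ℝ) = -(T+ρ)+2*η from by ring,
          show (-(T+ρ+2*η) : ℝ) = -(T+ρ)-2*η from by ring] at h
        exact h
      have s4 := hIL1 (-(T+ρ)+η) (-(T+ρ)+η) (by linarith)
      rw [show ((-(T+ρ)+η) - η : ℝ) = -(T+ρ) from by ring,
        show ((-(T+ρ)+η) + η : ℝ) = -(T+ρ)+2*η from by ring] at s4
      rw [show (-(T+ρ-η) : ℝ) = -(T+ρ)+η from by ring]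
      linarith
    have c3 : FF (T+ρ) (T+ρ) ≤ GG (T+ρ-η) (T+ρ-η) := by
      have s1 := hIL1 (T+ρ+η) (T+ρ-η) (by linarith)
      rw [show ((T+ρ+η) - η : ℝ) = T+ρ from by ring,
        show ((T+ρ-η) + η : ℝ) = T+ρ from by ring] at s1
      have s2 := hIL2 (T+ρ+2*η) (T+ρ-2*η) (by linarith)
      rw [show ((T+ρ+2*η) - η : ℝ) = T+ρ+η from by ring,
        show ((T+ρ-2*η) + η : ℝ) = T+ρ-η from by ring] at s2
      have s3 : FF (T+ρ+2*η) (T+ρ-2*η) = FF (T+ρ-2*η) (T+ρ) := by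
        exact Hz3 (T+ρ+2*η) (T+ρ-2*η) (T+ρ-2*η) (T+ρ)
          (by linarith) (by linarith) (by linarith) (by linarith)
          (by linarith) (by linarith) (by linarith) (by linarith)
      have s4 := hIL1 (T+ρ-η) (T+ρ-η) (by linarith)
      rw [show ((T+ρ-η) - η : ℝ) = T+ρ-2*η from by ring,
        show ((T+ρ-η) + η : ℝ) = T+ρ from by ring] at s4
      linarith
    have c4 : GG (-(T+ρ-η)) (T+ρ-η) ≤ FF (-(T+ρ)) (T+ρ) := by
      have s1 := hIL2 (-(T+ρ)+2*η) (T+ρ-2*η) (by linarith)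
      rw [show ((-(T+ρ)+2*η) - η : ℝ) = -(T+ρ-η) from by ring,
        show ((T+ρ-2*η) + η : ℝ) = T+ρ-η from by ring] at s1
      have s2 : FF (-(T+ρ)+2*η) (T+ρ-2*η) = FF (-(T+ρ)) (T+ρ) := by
        have h := Hza (T+ρ-2*η) (T+ρ-2*η) (T+ρ) (T+ρ)
          (by linarith) (by linarith) (by linarith) (by linarith)
          (by linarith) (by linarith) (by linarith) (by linarith)
        rw [show (-(T+ρ-2*η) : ℝ) = -(T+ρ)+2*η from by ring] at h
        exact h
      linarith
    -- the F-box has positive measure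
    have hRF : 1 ≤ Rf F (u + cv (-(T+ρ))) (u + cv (T+ρ)) (v + cv (-(T+ρ))) (v + cv (T+ρ)) := by
      rw [hRfF]
      linarith
    obtain ⟨x, y, hb1, hb2, hb3, hb4, hxy, hmxy⟩ := cp_of_box i0 hJF
      (vle_shift (by linarith)) (hvab (T+ρ) (-(T+ρ)) (by linarith))
      (vle_shift (by linarith)) hRF
    refine ⟨x, y, hmxy, ?_, ?_, ?_⟩
    · intro i
      have h1 := hb1 i
      have h2 := hb2 i
      simp only [Pi.add_apply, cv_apply] at h1 h2
      rw [abs_le]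
      constructor <;> [linarith; linarith]
    · intro i
      have h1 := hb3 i
      have h2 := hb4 i
      simp only [Pi.add_apply, cv_apply] at h1 h2
      rw [abs_le]
      constructor <;> [linarith; linarith]
    · intro i
      have h1 := hb2 i
      have h2 := hb3 i
      have h3 := hE i
      simp only [Pi.add_apply, cv_apply] at h1 h2
      linarith
  -- Openness: T = ε
  have hTeq : T = ε := by
    by_contra hne
    have hTlt : T < ε := lt_of_le_of_ne hTε hne
    obtain ⟨q1, q2, hq12, hqm, hqd1, hqd2⟩ := hGoodT
    set η := min (δs/4) (ε - T) with hηdef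
    have hη0 : 0 < η := lt_min (by linarith) (by linarith)
    have hηδ : η ≤ δs/4 := min_le_left _ _
    have hηε : η ≤ ε - T := min_le_right _ _
    set τ' := T + η with hτ'def
    have hτ'0 : 0 ≤ τ' := by rw [hτ'def]; linarith
    have hτ'ε : τ' ≤ ε := by rw [hτ'def]; linarith
    set g := β τ' with hgdef
    have hadmτ' := (hadm τ' ⟨hτ'0, hτ'ε⟩).1
    have hJg : JumpMonot g := hadmτ'.2.1
    set GG : ℝ → ℝ → ℤ := fun a b => (g (u + cv a, v + cv b) : ℤ) with hGG
    have hRfg : ∀ a1 a2 b1 b2 : ℝ, Rf g (u + cv a1) (u + cv a2) (v + cv b1) (v + cv b2) =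
        GG a2 b1 - GG a1 b1 - GG a2 b2 + GG a1 b2 := fun _ _ _ _ => rfl
    have hILn : Interleaved F g η := by
      have h := hint T ⟨hT0, hTε⟩ τ' ⟨hτ'0, hτ'ε⟩
      have habs : |T - τ'| = η := by
        rw [hτ'def, show (T - (T + η) : ℝ) = -η from by ring, abs_neg]
        exact abs_of_nonneg (by linarith)
      rwa [habs] at h
    have hIL1 : ∀ a b : ℝ, a - b < 2*ε+100*χ → FF (a-η) (b+η) ≤ GG a b := by
      intro a b hab
      have h := (hILn (u + cv a) (v + cv b) (hvab a b hab)).1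
      rw [shift_sub, shift_add] at h
      simp only [hFF, hGG]
      exact_mod_cast h
    have hIL2 : ∀ a b : ℝ, a - b < 2*ε+100*χ → GG (a-η) (b+η) ≤ FF a b := by
      intro a b hab
      have h := (hILn (u + cv a) (v + cv b) (hvab a b hab)).2
      rw [shift_sub, shift_add] at h
      simp only [hFF, hGG]
      exact_mod_cast h
    have hgapq : ∀ i, 2*ε + 100*χ - 2*T ≤ q2 i - q1 i := by
      intro i
      have h1 := hE i
      have h2 := abs_le.mp (hqd1 i)
      have h3 := abs_le.mp (hqd2 i)
      linarith [h2.1, h2.2, h3.1, h3.2]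
    -- a cornerpoint of g within τ' of (u,v)
    have hGoodτ' : ∃ x y : Fin n → ℝ, vlt x y ∧ 0 < mult g x y ∧
        (∀ i, |u i - x i| ≤ τ') ∧ (∀ i, |v i - y i| ≤ τ') := by
      apply cp_limit i0 hJg u v τ' (98*χ) hτ'0 (by linarith)
      intro m
      set ρ := min (δs/4) (1/((m:ℝ)+1)) with hρdef
      have hρ0 : 0 < ρ := lt_min (by linarith) (by positivity)
      have hρδ : ρ ≤ δs/4 := min_le_left _ _
      have hρm : ρ ≤ 1/((m:ℝ)+1) := min_le_right _ _
      have hρχ : ρ ≤ χ/4 := by linarith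
      have hηχ : η ≤ χ/4 := by linarith
      have hmu : 1 ≤ muE F (cv (ρ/2)) q1 q2 := by
        apply one_le_muE_of_mult_pos hJF hqm
        · intro i; simp only [Pi.zero_apply, cv_apply]; linarith
        · intro i
          have := hgapq i
          simp only [Pi.add_apply, Pi.sub_apply, cv_apply]
          linarith
      rw [muE_eq_Rf] at hmu
      have hFbox : 1 ≤ FF (T+ρ) (-(T+ρ)) - FF (-(T+ρ)) (-(T+ρ))
          - FF (T+ρ) (T+ρ) + FF (-(T+ρ)) (T+ρ) := by
        rw [← hRfF]
        refine le_trans hmu (Rf_mono hJF ?_ ?_ ?_ ?_ ?_ ?_ ?_)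
        · intro i
          have h2 := abs_le.mp (hqd1 i)
          simp only [Pi.add_apply, Pi.sub_apply, cv_apply]
          linarith [h2.1]
        · intro i; simp only [Pi.add_apply, Pi.sub_apply, cv_apply]; linarith
        · intro i
          have h2 := abs_le.mp (hqd1 i)
          simp only [Pi.add_apply, cv_apply]
          linarith [h2.2]
        · exact hvab (T+ρ) (-(T+ρ)) (by linarith)
        · intro i
          have h3 := abs_le.mp (hqd2 i)
          simp only [Pi.add_apply, Pi.sub_apply, cv_apply]
          linarith [h3.1]
        · intro i; simp only [Pi.add_apply, Pi.sub_apply, cv_apply]; linarith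
        · intro i
          have h3 := abs_le.mp (hqd2 i)
          simp only [Pi.add_apply, cv_apply]
          linarith [h3.2]
      -- corner estimates
      have d1 : FF (T+ρ) (-(T+ρ)) ≤ GG (T+ρ+η) (-(T+ρ+η)) := by
        have h := hIL1 (T+ρ+η) (-(T+ρ+η)) (by linarith)
        rw [show ((T+ρ+η) - η : ℝ) = T+ρ from by ring,
          show ((-(T+ρ+η)) + η : ℝ) = -(T+ρ) from by ring] at h
        exact h
      have d2 : GG (-(T+ρ+η)) (-(T+ρ+η)) ≤ FF (-(T+ρ)) (-(T+ρ)) := by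
        have s1 := hIL2 (-(T+ρ)) (-(T+ρ)-2*η) (by linarith)
        rw [show ((-(T+ρ)) - η : ℝ) = -(T+ρ+η) from by ring,
          show ((-(T+ρ)-2*η) + η : ℝ) = -(T+ρ+η) from by ring] at s1
        have s2 : FF (-(T+ρ)) (-(T+ρ)-2*η) = FF (-(T+ρ)) (-(T+ρ)) := by
          have h := Hab (T+ρ) (T+ρ+2*η) (T+ρ) (T+ρ)
            (by linarith) (by linarith) (by linarith) (by linarith)
            (by linarith) (by linarith) (by linarith) (by linarith)
          rw [show (-(T+ρ+2*η) : ℝ) = -(T+ρ)-2*η from by ring] at h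
          exact h
        linarith
      have d3 : GG (T+ρ+η) (T+ρ+η) ≤ FF (T+ρ) (T+ρ) := by
        have s1 := hIL2 (T+ρ+2*η) (T+ρ) (by linarith)
        rw [show ((T+ρ+2*η) - η : ℝ) = T+ρ+η from by ring,
          show ((T+ρ) + η : ℝ) = T+ρ+η from by ring] at s1
        have s2 : FF (T+ρ+2*η) (T+ρ) = FF (T+ρ) (T+ρ) :=
          Hz3 (T+ρ+2*η) (T+ρ) (T+ρ) (T+ρ)
            (by linarith) (by linarith) (by linarith) (by linarith)
            (by linarith) (by linarith) (by linarith) (by linarith)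
        linarith
      have d4 : FF (-(T+ρ)) (T+ρ) ≤ GG (-(T+ρ+η)) (T+ρ+η) := by
        have s1 := hIL1 (-(T+ρ+η)) (T+ρ+η) (by linarith)
        rw [show ((-(T+ρ+η)) - η : ℝ) = -(T+ρ)-2*η from by ring,
          show ((T+ρ+η) + η : ℝ) = T+ρ+2*η from by ring] at s1
        have s2 : FF (-(T+ρ)-2*η) (T+ρ+2*η) = FF (-(T+ρ)) (T+ρ) := by
          have h := Hza (T+ρ+2*η) (T+ρ+2*η) (T+ρ) (T+ρ)
            (by linarith) (by linarith) (by linarith) (by linarith)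
            (by linarith) (by linarith) (by linarith) (by linarith)
          rw [show (-(T+ρ+2*η) : ℝ) = -(T+ρ)-2*η from by ring] at h
          exact h
        linarith
      have hGbox : 1 ≤ Rf g (u + cv (-(T+ρ+η))) (u + cv (T+ρ+η))
          (v + cv (-(T+ρ+η))) (v + cv (T+ρ+η)) := by
        rw [hRfg]
        linarith
      obtain ⟨x, y, hb1, hb2, hb3, hb4, hxy, hmxy⟩ := cp_of_box i0 hJg
        (vle_shift (by linarith)) (hvab (T+ρ+η) (-(T+ρ+η)) (by linarith))
        (vle_shift (by linarith)) hGbox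
      refine ⟨x, y, hmxy, ?_, ?_, ?_⟩
      · intro i
        have h1 := hb1 i
        have h2 := hb2 i
        simp only [Pi.add_apply, cv_apply] at h1 h2
        rw [abs_le, hτ'def]
        constructor <;> [linarith; linarith]
      · intro i
        have h1 := hb3 i
        have h2 := hb4 i
        simp only [Pi.add_apply, cv_apply] at h1 h2
        rw [abs_le, hτ'def]
        constructor <;> [linarith; linarith]
      · intro i
        have h1 := hb2 i
        have h2 := hb3 i
        have h3 := hE i
        simp only [Pi.add_apply, cv_apply] at h1 h2
        linarith
    obtain ⟨x, y, hxy, hmxy, hdx, hdy⟩ := hGoodτ'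
    have hτ'S : τ' ∈ S := ⟨⟨hτ'0, hτ'ε⟩, x, y, hxy, hmxy, hdx, hdy⟩
    have : τ' ≤ T := le_csSup hSbdd hτ'S
    rw [hτ'def] at this
    linarith
  -- conclude
  obtain ⟨x, y, hxy, hmxy, hdx, hdy⟩ := hGoodT
  have hFε : F = β ε := by rw [hFdef, hTeq]
  rw [hFε] at hmxy
  refine ⟨x, y, hxy, hmxy, ?_⟩
  apply max_le
  · rw [pi_norm_le_iff_of_nonneg hε]
    intro i
    rw [Real.norm_eq_abs, Pi.sub_apply]
    have := hdx i
    rw [hTeq] at this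
    exact this
  · rw [pi_norm_le_iff_of_nonneg hε]
    intro i
    rw [Real.norm_eq_abs, Pi.sub_apply]
    have := hdy i
    rw [hTeq] at this
    exact this
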